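/- Let (G,f) be a P-filtered graph and let e, d be distinct edges of G. If e is collapsible and d is not collapsible in (G,f), then d is not collapsible in the simple collapse (G↓e, f). Likewise, if e is collapsible and d is not deletable in (G,f), then d is not deletable in (G↓e, f). -/

import Mathlib

structure Grph where
  V : Type
  E : Type
  [fintV : Fintype V]
  [fintE : Fintype E]
  [decV : DecidableEq V]
  [decE : DecidableEq E]
  bnd : E → V × V

attribute [instance] Grph.fintV Grph.fintE Grph.decV Grph.decE

/-- boundary map k⟨E⟩ → k⟨V⟩, e ↦ e₁ - e₀ -/
noncomputable def Grph.d (G : Grph) (k : Type) [Field k] :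
    (G.E →₀ k) →ₗ[k] (G.V →₀ k) :=
  Finsupp.linearCombination k fun e =>
    Finsupp.single (G.bnd e).2 1 - Finsupp.single (G.bnd e).1 1

def Grph.adj (G : Grph) (v w : G.V) : Prop :=
  ∃ e, G.bnd e = (v, w) ∨ G.bnd e = (w, v)

structure FGrph (P : Type) [PartialOrder P] extends Grph where
  fV : V → P
  fE : E → P
  mono0 : ∀ e, fV (bnd e).1 ≤ fE e
  mono1 : ∀ e, fV (bnd e).2 ≤ fE e

variable {P : Type} [PartialOrder P]

/-- boundary map of the sublevel graph at grade r -/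
noncomputable def FGrph.dr (G : FGrph P) (k : Type) [Field k] (r : P) :
    ({e : G.E // G.fE e ≤ r} →₀ k) →ₗ[k] ({v : G.V // G.fV v ≤ r} →₀ k) :=
  Finsupp.linearCombination k fun e =>
    Finsupp.single ⟨(G.bnd e.1).2, le_trans (G.mono1 e.1) e.2⟩ 1 -
    Finsupp.single ⟨(G.bnd e.1).1, le_trans (G.mono0 e.1) e.2⟩ 1

noncomputable def FGrph.vmap (G : FGrph P) (k : Type) [Field k] {r s : P} (h : r ≤ s) :
    ({v : G.V // G.fV v ≤ r} →₀ k) →ₗ[k] ({v : G.V // G.fV v ≤ s} →₀ k) :=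
  Finsupp.lmapDomain k k fun v => ⟨v.1, le_trans v.2 h⟩

noncomputable def FGrph.emap (G : FGrph P) (k : Type) [Field k] {r s : P} (h : r ≤ s) :
    ({e : G.E // G.fE e ≤ r} →₀ k) →ₗ[k] ({e : G.E // G.fE e ≤ s} →₀ k) :=
  Finsupp.lmapDomain k k fun e => ⟨e.1, le_trans e.2 h⟩

lemma FGrph.dNat (G : FGrph P) (k : Type) [Field k] {r s : P} (h : r ≤ s) :
    (G.dr k s).comp (G.emap k h) = (G.vmap k h).comp (G.dr k r) := by
  apply Finsupp.lhom_ext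
  intro e a
  show (G.dr k s) ((G.emap k h) (Finsupp.single e a)) =
    (G.vmap k h) ((G.dr k r) (Finsupp.single e a))
  rw [FGrph.emap, Finsupp.lmapDomain_apply, Finsupp.mapDomain_single, FGrph.dr,
    Finsupp.linearCombination_single, FGrph.dr, Finsupp.linearCombination_single,
    map_smul, map_sub, FGrph.vmap, Finsupp.lmapDomain_apply, Finsupp.lmapDomain_apply,
    Finsupp.mapDomain_single, Finsupp.mapDomain_single]

/-- 0-dim homology of the sublevel graph at r -/
noncomputable abbrev FGrph.H0at (G : FGrph P) (k : Type) [Field k] (r : P) :=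
  ({v : G.V // G.fV v ≤ r} →₀ k) ⧸ LinearMap.range (G.dr k r)

noncomputable def FGrph.H0map (G : FGrph P) (k : Type) [Field k] {r s : P} (h : r ≤ s) :
    G.H0at k r →ₗ[k] G.H0at k s :=
  Submodule.mapQ _ _ (G.vmap k h) (by
    rintro x ⟨y, rfl⟩
    exact ⟨G.emap k h y, by
      have := LinearMap.congr_fun (G.dNat k h) y
      simpa using this⟩)

noncomputable abbrev FGrph.H1at (G : FGrph P) (k : Type) [Field k] (r : P) :=
  LinearMap.ker (G.dr k r)

noncomputable def FGrph.H1map (G : FGrph P) (k : Type) [Field k] {r s : P} (h : r ≤ s) :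
    G.H1at k r →ₗ[k] G.H1at k s :=
  (G.emap k h).restrict (p := LinearMap.ker (G.dr k r)) (q := LinearMap.ker (G.dr k s))
    (by
      intro x hx
      have := LinearMap.congr_fun (G.dNat k h) x
      simp only [LinearMap.mem_ker] at hx ⊢
      simp only [LinearMap.coe_comp, Function.comp_apply] at this
      rw [this, hx, map_zero])

def FGrph.adjAt (G : FGrph P) (r : P) (a b : G.V) : Prop :=
  ∃ e, G.fE e ≤ r ∧ (G.bnd e = (a, b) ∨ G.bnd e = (b, a))

def FGrph.connAt (G : FGrph P) (r : P) : G.V → G.V → Prop :=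
  Relation.ReflTransGen (G.adjAt r)

def FGrph.pi0At (G : FGrph P) (r : P) :=
  Quot (fun a b : {v : G.V // G.fV v ≤ r} => G.adjAt r a.1 b.1)

def FGrph.Collapsible (G : FGrph P) (e : G.E) : Prop :=
  (G.bnd e).1 ≠ (G.bnd e).2 ∧
    (G.fE e = G.fV (G.bnd e).1 ∨ G.fE e = G.fV (G.bnd e).2)

def FGrph.delete (G : FGrph P) (e : G.E) : FGrph P where
  V := G.V
  E := {d : G.E // d ≠ e}
  bnd d := G.bnd d.1
  fV := G.fV
  fE d := G.fE d.1
  mono0 d := G.mono0 d.1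
  mono1 d := G.mono1 d.1

def FGrph.Deletable (G : FGrph P) (e : G.E) : Prop :=
  (G.delete e).connAt (G.fE e) (G.bnd e).1 (G.bnd e).2

def FGrph.collapse (G : FGrph P) (e : G.E) (x y : G.V) (hxy : y ≠ x)
    (hf : G.fV y ≤ G.fV x) : FGrph P where
  V := {v : G.V // v ≠ x}
  E := {d : G.E // d ≠ e}
  bnd d :=
    (if h : (G.bnd d.1).1 = x then ⟨y, hxy⟩ else ⟨(G.bnd d.1).1, h⟩,
     if h : (G.bnd d.1).2 = x then ⟨y, hxy⟩ else ⟨(G.bnd d.1).2, h⟩)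
  fV v := G.fV v.1
  fE d := G.fE d.1
  mono0 d := by
    dsimp only
    split
    · exact le_trans hf (by rw [← ‹(G.bnd d.1).1 = x›]; exact G.mono0 d.1)
    · exact G.mono0 d.1
  mono1 d := by
    dsimp only
    split
    · exact le_trans hf (by rw [← ‹(G.bnd d.1).2 = x›]; exact G.mono1 d.1)
    · exact G.mono1 d.1

/-
Let `π` be the vertex map of the collapse, sending `x` to `y` and fixing every other vertex.
As `f(y) ≤ f(x)`, we have `f(π v) ≤ f(v)`; for an endpoint `v` of `d` also `f(v) ≤ f(d)`, so
`f(d) = f(π v)` forces `f(d) = f(v)` and collapsibility of `d` pulls back from `G↓e` to `G`.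
The collapsed edge `e` survives in `G ∖ d`, and `f(e) = f(x)`, so at every grade where `x` is
present it is joined to `π x = y`. An edge of `(G↓e) ∖ d` has endpoints `π u`, `π v` for an
edge `uv` of `G ∖ d` of the same grade, which gives the path `π u, u, v, π v` in `G ∖ d`; hence
connections in `(G↓e) ∖ d` lift to `G ∖ d`, and deletability pulls back as well.
-/

namespace FGrph

instance (G : FGrph P) (r : P) : Std.Symm (G.adjAt r) where
  symm _ _ := fun ⟨c, hc, h⟩ => ⟨c, hc, h.symm⟩

theorem connAt_symm {G : FGrph P} {r : P} {a b : G.V} (h : G.connAt r a b) :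
    G.connAt r b a :=
  Relation.ReflTransGen.stdSymm.symm _ _ h

theorem fV_le_of_adjAt {G : FGrph P} {r : P} {a b : G.V} (h : G.adjAt r a b) :
    G.fV a ≤ r := by
  obtain ⟨c, hc, hab | hba⟩ := h
  · exact (hab ▸ G.mono0 c).trans hc
  · exact (hba ▸ G.mono1 c).trans hc

section Redirect

variable {G : FGrph P} {e : G.E} {x y : G.V}

theorem fV_ite_le (hf : G.fV y ≤ G.fV x) (v : G.V) :
    G.fV (if v = x then y else v) ≤ G.fV v := by
  split_ifs with hv
  · exact hv ▸ hf
  · exact le_rfl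

theorem connAt_ite_of_bnd (hbnd : G.bnd e = (x, y) ∨ G.bnd e = (y, x))
    (hfe : G.fE e = G.fV x) {r : P} {v : G.V} (hv : G.fV v ≤ r) :
    G.connAt r v (if v = x then y else v) := by
  split_ifs with hvx
  · subst hvx
    exact Relation.ReflTransGen.single ⟨e, hfe ▸ hv, hbnd⟩
  · exact Relation.ReflTransGen.refl

theorem connAt_ite_of_adjAt (hbnd : G.bnd e = (x, y) ∨ G.bnd e = (y, x))
    (hfe : G.fE e = G.fV x) {r : P} {u v : G.V} (h : G.adjAt r u v) :
    G.connAt r (if u = x then y else u) (if v = x then y else v) :=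
  (connAt_symm (connAt_ite_of_bnd hbnd hfe (fV_le_of_adjAt h))).trans <|
    (Relation.ReflTransGen.single h).trans <|
      connAt_ite_of_bnd hbnd hfe (fV_le_of_adjAt (symm h))

end Redirect

section Collapse

variable {G : FGrph P} {e : G.E} {x y : G.V} {hne : y ≠ x} {hf : G.fV y ≤ G.fV x}

-- Stated for `{c // c ≠ e}` rather than `(G.collapse e x y hne hf).E`: only then do these
-- rewrite terms such as `⟨d, hd⟩`, since `collapse` is not reducible.
theorem collapse_bnd_fst_val (c : {c : G.E // c ≠ e}) :
    ((G.collapse e x y hne hf).bnd c).1.1 =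
      if (G.bnd c.1).1 = x then y else (G.bnd c.1).1 := by
  simp only [collapse, apply_dite Subtype.val, dite_eq_ite]

theorem collapse_bnd_snd_val (c : {c : G.E // c ≠ e}) :
    ((G.collapse e x y hne hf).bnd c).2.1 =
      if (G.bnd c.1).2 = x then y else (G.bnd c.1).2 := by
  simp only [collapse, apply_dite Subtype.val, dite_eq_ite]

theorem Collapsible.of_collapse {d : {d : G.E // d ≠ e}}
    (hd : (G.collapse e x y hne hf).Collapsible d) : G.Collapsible d.1 := by
  obtain ⟨hdistinct, hgrade⟩ := hd
  refine ⟨fun h => hdistinct (Subtype.ext ?_), ?_⟩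
  · simp only [collapse_bnd_fst_val, collapse_bnd_snd_val, h]
  change G.fE d.1 = G.fV ((G.collapse e x y hne hf).bnd d).1.1 ∨
    G.fE d.1 = G.fV ((G.collapse e x y hne hf).bnd d).2.1 at hgrade
  simp only [collapse_bnd_fst_val, collapse_bnd_snd_val] at hgrade
  rcases hgrade with h | h
  · exact Or.inl (le_antisymm (h.trans_le (fV_ite_le hf _)) (G.mono0 d.1))
  · exact Or.inr (le_antisymm (h.trans_le (fV_ite_le hf _)) (G.mono1 d.1))

theorem connAt_delete_of_adjAt_collapse_delete (hbnd : G.bnd e = (x, y) ∨ G.bnd e = (y, x))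
    (hfe : G.fE e = G.fV x) {d : G.E} (hd : d ≠ e) {r : P}
    {a b : (G.collapse e x y hne hf).V}
    (h : ((G.collapse e x y hne hf).delete ⟨d, hd⟩).adjAt r a b) :
    (G.delete d).connAt r a.1 b.1 := by
  obtain ⟨⟨⟨c, hce⟩, hcd⟩, hcr, hab⟩ := h
  have hc : (G.delete d).connAt r (if (G.bnd c).1 = x then y else (G.bnd c).1)
      (if (G.bnd c).2 = x then y else (G.bnd c).2) :=
    connAt_ite_of_adjAt (G := G.delete d) (e := ⟨e, hd.symm⟩) hbnd hfe
      ⟨⟨c, fun h => hcd (Subtype.ext h)⟩, hcr, Or.inl rfl⟩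
  change (G.collapse e x y hne hf).bnd ⟨c, hce⟩ = (a, b) ∨
    (G.collapse e x y hne hf).bnd ⟨c, hce⟩ = (b, a) at hab
  rcases hab with hab | hab <;> obtain ⟨rfl, rfl⟩ := Prod.ext_iff.mp hab <;>
    simp only [collapse_bnd_fst_val, collapse_bnd_snd_val]
  exacts [hc, connAt_symm hc]

theorem Deletable.of_collapse (hbnd : G.bnd e = (x, y) ∨ G.bnd e = (y, x))
    (hfe : G.fE e = G.fV x) {d : G.E} (hd : d ≠ e)
    (h : (G.collapse e x y hne hf).Deletable ⟨d, hd⟩) : G.Deletable d := by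
  have hlift : (G.delete d).connAt (G.fE d) (if (G.bnd d).1 = x then y else (G.bnd d).1)
      (if (G.bnd d).2 = x then y else (G.bnd d).2) := by
    have hpath := Relation.ReflTransGen.lift' Subtype.val
      (fun _ _ hab => connAt_delete_of_adjAt_collapse_delete hbnd hfe hd hab) _ _ h
    simp only [Function.onFun, collapse_bnd_fst_val, collapse_bnd_snd_val] at hpath
    exact hpath
  have connAt_ite {v : G.V} (hv : G.fV v ≤ G.fE d) :=
    connAt_ite_of_bnd (G := G.delete d) (e := ⟨e, hd.symm⟩) hbnd hfe hv
  exact (connAt_ite (G.mono0 d)).trans (hlift.trans (connAt_symm (connAt_ite (G.mono1 d))))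

end Collapse

end FGrph

theorem not_collapsible_not_deletable_after_collapse (G : FGrph P) (e d : G.E)
    (hd : d ≠ e) (x y : G.V) (hne : y ≠ x)
    (hbnd : G.bnd e = (x, y) ∨ G.bnd e = (y, x)) (hfe : G.fE e = G.fV x)
    (hf : G.fV y ≤ G.fV x) :
    (¬ G.Collapsible d → ¬ (G.collapse e x y hne hf).Collapsible ⟨d, hd⟩) ∧
    (¬ G.Deletable d → ¬ (G.collapse e x y hne hf).Deletable ⟨d, hd⟩) :=
  ⟨mt FGrph.Collapsible.of_collapse, mt (FGrph.Deletable.of_collapse hbnd hfe hd)⟩
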